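/- Let n ≥ 1 and let U' be a 2^n × 2^n unitary matrix. Let U₂ := I_{2^n} ⊗ |0⟩⟨0| + U' ⊗ |1⟩⟨1| be the controlled-U' unitary on n + 1 qubits, with qubit n + 1 the control. Then for every j ∈ {1,…,n}, C_LHST^{(j)}(U₂, I_{2^{n+1}}) = (1/2) · C_LHST^{(j)}(U', I_{2^n}). -/

import Mathlib

open Matrix Kronecker Complex

noncomputable section

/-- The Hilbert-Schmidt test cost `C_HST(U,V) = 1 - |Tr(V†U)|²/d²` for `d × d` matrices. -/
def CHSTd (d : ℕ) (U V : Matrix (Fin d) (Fin d) ℂ) : ℝ :=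
  1 - ‖(Vᴴ * U).trace‖ ^ 2 / (d : ℝ) ^ 2

/-- The Hilbert-Schmidt test cost for unitaries on `n` qubits (`d = 2^n`). -/
def CHST (n : ℕ) (U V : Matrix (Fin n → Fin 2) (Fin n → Fin 2) ℂ) : ℝ :=
  1 - ‖(Vᴴ * U).trace‖ ^ 2 / ((2 : ℝ) ^ n) ^ 2

/-- The local channel `E_j(ρ) = Tr_{j̄}[ W (ρ_(j) ⊗ I/2^(n-1)) W† ]`, where `ρ` is placed on
qubit `j`, the maximally mixed state on the other qubits, and the partial trace is over all
qubits except `j`.  (The sum over `r` double-counts the assignments of the qubits other than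
`j`, whence the extra factor `1/2`.) -/
def Ej (n : ℕ) (j : Fin n) (W : Matrix (Fin n → Fin 2) (Fin n → Fin 2) ℂ)
    (ρ : Matrix (Fin 2) (Fin 2) ℂ) : Matrix (Fin 2) (Fin 2) ℂ :=
  Matrix.of fun a b =>
    (1 / 2 ^ (n - 1) : ℂ) * (1 / 2) *
      ∑ r : Fin n → Fin 2, ∑ s : Fin n → Fin 2, ∑ t : Fin n → Fin 2,
        (if Function.update s j 0 = Function.update t j 0 then
          W (Function.update r j a) s * ρ (s j) (t j) * star (W (Function.update r j b) t)
        else 0)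

/-- The two-qubit maximally entangled state `|Φ₂⁺⟩ = (|00⟩+|11⟩)/√2`. -/
def phi2 : (Fin 2 × Fin 2) → ℂ := fun p => if p.1 = p.2 then ((1 / Real.sqrt 2 : ℝ) : ℂ) else 0

/-- The projector `|Φ₂⁺⟩⟨Φ₂⁺|`. -/
def phi2Proj : Matrix (Fin 2 × Fin 2) (Fin 2 × Fin 2) ℂ :=
  Matrix.of fun p q => if p.1 = p.2 ∧ q.1 = q.2 then (1 / 2 : ℂ) else 0

/-- `(E ⊗ id)(ρ)` for a map `E` on one-qubit matrices and a two-qubit matrix `ρ`. -/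
def tensorId (E : Matrix (Fin 2) (Fin 2) ℂ → Matrix (Fin 2) (Fin 2) ℂ)
    (ρ : Matrix (Fin 2 × Fin 2) (Fin 2 × Fin 2) ℂ) :
    Matrix (Fin 2 × Fin 2) (Fin 2 × Fin 2) ℂ :=
  Matrix.of fun p q => ∑ a : Fin 2, ∑ b : Fin 2,
    ρ (a, p.2) (b, q.2) * E (Matrix.single a b 1) p.1 q.1

/-- The entanglement fidelity `F_e^(j) = ⟨Φ₂⁺|(E_j ⊗ id)(|Φ₂⁺⟩⟨Φ₂⁺|)|Φ₂⁺⟩`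
(as a complex number), with `W = U V†`. -/
def FeC (n : ℕ) (j : Fin n) (U V : Matrix (Fin n → Fin 2) (Fin n → Fin 2) ℂ) : ℂ :=
  star phi2 ⬝ᵥ (tensorId (Ej n j (U * Vᴴ)) phi2Proj).mulVec phi2

/-- The entanglement fidelity `F_e^(j)` (a real number). -/
def Fe (n : ℕ) (j : Fin n) (U V : Matrix (Fin n → Fin 2) (Fin n → Fin 2) ℂ) : ℝ :=
  (FeC n j U V).re

/-- The local Hilbert-Schmidt cost for qubit `j`: `C_LHST^(j)(U,V) = 1 - F_e^(j)`. -/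
def CLHSTj (n : ℕ) (j : Fin n) (U V : Matrix (Fin n → Fin 2) (Fin n → Fin 2) ℂ) : ℝ :=
  1 - Fe n j U V

/-- The local Hilbert-Schmidt cost `C_LHST(U,V) = (1/n) Σ_j C_LHST^(j)(U,V)`. -/
def CLHST (n : ℕ) (U V : Matrix (Fin n → Fin 2) (Fin n → Fin 2) ℂ) : ℝ :=
  (1 / n : ℝ) * ∑ j : Fin n, CLHSTj n j U V

end

noncomputable section

/-- The controlled-`U'` unitary `I ⊗ |0⟩⟨0| + U' ⊗ |1⟩⟨1|` on `n + 1` qubits, with qubit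
`n + 1` (the last qubit) the control: it acts as the identity on the first `n` qubits
when the control is `|0⟩` and as `U'` when the control is `|1⟩`. -/
def ctrlLast (n : ℕ) (U' : Matrix (Fin n → Fin 2) (Fin n → Fin 2) ℂ) :
    Matrix (Fin (n + 1) → Fin 2) (Fin (n + 1) → Fin 2) ℂ :=
  Matrix.of fun s t =>
    if s (Fin.last n) = t (Fin.last n) then
      (if s (Fin.last n) = 0 then
        (if (fun i : Fin n => s i.castSucc) = (fun i : Fin n => t i.castSucc) then 1 else 0)
      else U' (fun i : Fin n => s i.castSucc) (fun i : Fin n => t i.castSucc))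
    else 0

/-!
Evaluating `E_j` on the matrix units gives `F_e^(j)(W, I) = ‖Tr_j W‖² / 2^(n+1)`, where `Tr_j` is
the partial trace over qubit `j` and `‖·‖` the Frobenius norm. The partial trace of the
controlled unitary `U₂` over qubit `j` is block diagonal in the control qubit, with blocks
`Tr_j I = 2 I` and `Tr_j U'`, so `‖Tr_j U₂‖² = 2^(n+1) + ‖Tr_j U'‖²`, that is,
`F_e^(j)(U₂, I) = 1/2 + F_e^(j)(U', I)/2`.
-/

namespace Equiv

variable {α β : Type*} [DecidableEq α]

theorem funSplitAt_symm_apply_self (i : α) (x : β) (v : {k // k ≠ i} → β) :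
    (funSplitAt i β).symm (x, v) i = x := by
  simp [funSplitAt_symm_apply]

theorem update_funSplitAt_symm (i : α) (x y : β) (v : {k // k ≠ i} → β) :
    Function.update ((funSplitAt i β).symm (x, v)) i y = (funSplitAt i β).symm (y, v) := by
  funext k
  by_cases h : k = i
  · subst h; simp [funSplitAt_symm_apply]
  · simp [Function.update, h, funSplitAt_symm_apply]

theorem funSplitAt_symm_inj {i : α} {x y : β} {v w : {k // k ≠ i} → β} :
    (funSplitAt i β).symm (x, v) = (funSplitAt i β).symm (y, w) ↔ x = y ∧ v = w := by
  rw [(funSplitAt i β).symm.injective.eq_iff, Prod.mk.injEq]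

theorem sum_funSplitAt_symm {M : Type*} [AddCommMonoid M] [Fintype α] [Fintype β]
    (i : α) (f : (α → β) → M) :
    ∑ s, f s = ∑ x, ∑ v, f ((funSplitAt i β).symm (x, v)) := by
  rw [← (funSplitAt i β).symm.sum_comp f, Fintype.sum_prod_type]

end Equiv

abbrev OtherQubits {n : ℕ} (j : Fin n) := {k : Fin n // k ≠ j} → Fin 2

theorem star_phi2_dotProduct_tensorId_mulVec
    (E : Matrix (Fin 2) (Fin 2) ℂ → Matrix (Fin 2) (Fin 2) ℂ) :
    star phi2 ⬝ᵥ (tensorId E phi2Proj) *ᵥ phi2 =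
      1 / 4 * ∑ x, ∑ y, E (Matrix.single x y 1) x y := by
  have hsq : ((Real.sqrt 2 : ℝ) : ℂ)⁻¹ ^ 2 = 1 / 2 := by
    rw [inv_pow, ← Complex.ofReal_pow, Real.sq_sqrt zero_le_two]
    norm_num
  simp only [dotProduct, Matrix.mulVec, tensorId, phi2, phi2Proj, Matrix.of_apply, Pi.star_apply,
    Fintype.sum_prod_type, Fin.sum_univ_two]
  norm_num [Fin.ext_iff]
  ring_nf
  rw [hsq]
  ring

section PartialTrace

open Equiv

variable {n : ℕ} (j : Fin n)

def partialTraceAt (W : Matrix (Fin n → Fin 2) (Fin n → Fin 2) ℂ) :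
    Matrix (OtherQubits j) (OtherQubits j) ℂ :=
  Matrix.of fun v w =>
    ∑ x, W ((funSplitAt j (Fin 2)).symm (x, v)) ((funSplitAt j (Fin 2)).symm (x, w))

def frobeniusSq {ι : Type*} [Fintype ι] (A : Matrix ι ι ℂ) : ℂ :=
  ∑ v, ∑ w, A v w * star (A v w)

omit j in
theorem one_div_two_pow_pred (hn : 0 < n) : (1 / 2 ^ (n - 1) : ℂ) = 2 / 2 ^ n := by
  obtain ⟨m, rfl⟩ : ∃ m, n = m + 1 := Nat.exists_eq_add_one.mpr hn
  rw [Nat.add_sub_cancel, pow_succ]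
  field_simp

theorem Ej_single_apply_self (W : Matrix (Fin n → Fin 2) (Fin n → Fin 2) ℂ) (x y : Fin 2) :
    Ej n j W (Matrix.single x y 1) x y =
      2 / 2 ^ n * ∑ v, ∑ w,
        W ((funSplitAt j (Fin 2)).symm (x, v)) ((funSplitAt j (Fin 2)).symm (x, w)) *
          star (W ((funSplitAt j (Fin 2)).symm (y, v)) ((funSplitAt j (Fin 2)).symm (y, w))) := by
  rw [Ej, Matrix.of_apply, one_div_two_pow_pred j.pos]
  simp only [sum_funSplitAt_symm j, update_funSplitAt_symm, funSplitAt_symm_apply_self,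
    funSplitAt_symm_inj, Matrix.single, Matrix.of_apply]
  simp only [true_and, ite_and, mul_ite, mul_zero, mul_one, ite_mul, zero_mul,
    Finset.sum_ite_eq, Finset.mem_univ, if_true, Finset.sum_ite_irrel, Finset.sum_const_zero,
    Finset.sum_const, Finset.card_univ, Fintype.card_fin, nsmul_eq_mul, Nat.cast_ofNat]
  ring

theorem FeC_one_eq_frobeniusSq_partialTraceAt (W : Matrix (Fin n → Fin 2) (Fin n → Fin 2) ℂ) :
    FeC n j W 1 = frobeniusSq (partialTraceAt j W) / 2 ^ (n + 1) := by
  rw [FeC, Matrix.conjTranspose_one, Matrix.mul_one, star_phi2_dotProduct_tensorId_mulVec]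
  simp only [Ej_single_apply_self, frobeniusSq, partialTraceAt, Matrix.of_apply, star_sum,
    Finset.sum_mul_sum]
  simp only [Finset.mul_sum, Finset.sum_div]
  simp_rw [Finset.sum_comm (s := (Finset.univ : Finset (Fin 2)))
    (t := (Finset.univ : Finset (OtherQubits j)))]
  refine Fintype.sum_congr _ _ fun v => Fintype.sum_congr _ _ fun w =>
    Fintype.sum_congr _ _ fun x => Fintype.sum_congr _ _ fun y => ?_
  ring

end PartialTrace

section Control

open Equiv

variable {n : ℕ} (j : Fin n)

def snocOtherEquiv (β : Type*) :
    β × ({k : Fin n // k ≠ j} → β) ≃ ({k : Fin (n + 1) // k ≠ j.castSucc} → β) where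
  toFun p k := if h : k.1 = Fin.last n then p.1 else
    p.2 ⟨k.1.castPred h, fun hj => k.2 (by rw [← Fin.castSucc_castPred k.1 h, hj])⟩
  invFun v := (v ⟨Fin.last n, (Fin.castSucc_lt_last j).ne'⟩,
    fun k => v ⟨k.1.castSucc, Fin.castSucc_injective n |>.ne k.2⟩)
  left_inv p := by
    ext k
    · simp
    · simp [Fin.castSucc_ne_last]
  right_inv v := by
    funext k
    by_cases h : k.1 = Fin.last n
    · simp only [dif_pos h]
      exact congrArg v (Subtype.ext h.symm)
    · simp only [dif_neg h]
      exact congrArg v (Subtype.ext (Fin.castSucc_castPred k.1 h))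

theorem funSplitAt_symm_snocOtherEquiv {β : Type*} (x b : β) (v : {k : Fin n // k ≠ j} → β) :
    (funSplitAt j.castSucc β).symm (x, snocOtherEquiv j β (b, v)) =
        Fin.snoc ((funSplitAt j β).symm (x, v)) b := by
  funext k
  induction k using Fin.lastCases with
  | last => simp [funSplitAt_symm_apply, snocOtherEquiv, (Fin.castSucc_lt_last j).ne']
  | cast i =>
    by_cases h : i = j
    · subst h; simp [funSplitAt_symm_apply]
    · simp [funSplitAt_symm_apply, snocOtherEquiv, h, Fin.castSucc_ne_last]

omit j in
theorem ctrlLast_snoc_snoc (U' : Matrix (Fin n → Fin 2) (Fin n → Fin 2) ℂ) (s t : Fin n → Fin 2)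
    (b c : Fin 2) :
    ctrlLast n U' (Fin.snoc s b) (Fin.snoc t c) =
      if b = c then (if b = 0 then 1 else U') s t else 0 := by
  obtain rfl | hbc := eq_or_ne b c
  · by_cases hb : b = 0 <;> simp [ctrlLast, hb, Matrix.one_apply]
  · simp [ctrlLast, hbc]

theorem partialTraceAt_ctrlLast (U' : Matrix (Fin n → Fin 2) (Fin n → Fin 2) ℂ) (b c : Fin 2)
    (v w : OtherQubits j) :
    partialTraceAt j.castSucc (ctrlLast n U')
        (snocOtherEquiv j _ (b, v)) (snocOtherEquiv j _ (c, w)) =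
      if b = c then partialTraceAt j (if b = 0 then 1 else U') v w else 0 := by
  simp only [partialTraceAt, Matrix.of_apply, funSplitAt_symm_snocOtherEquiv, ctrlLast_snoc_snoc]
  split_ifs <;> simp

theorem partialTraceAt_one :
    partialTraceAt j (1 : Matrix (Fin n → Fin 2) (Fin n → Fin 2) ℂ) = 2 • 1 := by
  ext v w
  simp [partialTraceAt, Matrix.one_apply]

theorem frobeniusSq_partialTraceAt_ctrlLast (U' : Matrix (Fin n → Fin 2) (Fin n → Fin 2) ℂ) :
    frobeniusSq (partialTraceAt j.castSucc (ctrlLast n U')) =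
      frobeniusSq (partialTraceAt j 1) + frobeniusSq (partialTraceAt j U') := by
  simp only [frobeniusSq, ← (snocOtherEquiv j (Fin 2)).sum_comp, Fintype.sum_prod_type,
    partialTraceAt_ctrlLast, Fin.sum_univ_two]
  simp

theorem frobeniusSq_partialTraceAt_one :
    frobeniusSq (partialTraceAt j (1 : Matrix (Fin n → Fin 2) (Fin n → Fin 2) ℂ)) =
      2 ^ (n + 1) := by
  obtain ⟨m, rfl⟩ : ∃ m, n = m + 1 := Nat.exists_eq_add_one.mpr j.pos
  simp [frobeniusSq, partialTraceAt_one, Matrix.one_apply, map_ofNat]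
  ring

theorem FeC_ctrlLast_one (U' : Matrix (Fin n → Fin 2) (Fin n → Fin 2) ℂ) :
    FeC (n + 1) j.castSucc (ctrlLast n U') 1 = 1 / 2 + 1 / 2 * FeC n j U' 1 := by
  rw [FeC_one_eq_frobeniusSq_partialTraceAt, FeC_one_eq_frobeniusSq_partialTraceAt,
    frobeniusSq_partialTraceAt_ctrlLast, frobeniusSq_partialTraceAt_one]
  field_simp
  ring

end Control

theorem stmt18 (n : ℕ)
    (U' : Matrix (Fin n → Fin 2) (Fin n → Fin 2) ℂ)
    (j : Fin n) :
    CLHSTj (n + 1) j.castSucc (ctrlLast n U') 1 = (1 / 2) * CLHSTj n j U' 1 := by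
  simp only [CLHSTj, Fe, FeC_ctrlLast_one, Complex.add_re, Complex.mul_re]
  norm_num
  ring

end
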